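/- arXiv:0903.0520 — 5 statements merged into one kernel-verified Lean document; each statement's English description precedes it below -/
import Mathlib

section
/- Let m ≥ 1 be an integer and let B be any subset of the cells of the m × m square grid. Then |∂B| ≥ √(min{|B|, m² − |B|}). -/
/-- The cells of the `m × m` square grid: pairs `(i, j)` with `1 ≤ i, j ≤ m`. -/
def gridCells (m : ℕ) : Finset (ℕ × ℕ) := (Finset.Icc 1 m) ×ˢ (Finset.Icc 1 m)

/-- Two cells are adjacent if they agree in one coordinate and differ by exactly `1`
in the other (i.e. they share a side). -/
def adjacent (c c' : ℕ × ℕ) : Prop :=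
  (c.1 = c'.1 ∧ (c.2 + 1 = c'.2 ∨ c'.2 + 1 = c.2)) ∨
  (c.2 = c'.2 ∧ (c.1 + 1 = c'.1 ∨ c'.1 + 1 = c.1))

-- The boundary `∂B` of a set `B` of cells: all cells (of the grid) not in `B` that are
-- adjacent to some cell of `B`.
open Classical in
noncomputable def gridBoundary (m : ℕ) (B : Finset (ℕ × ℕ)) : Finset (ℕ × ℕ) :=
  (gridCells m).filter (fun c => c ∉ B ∧ ∃ c' ∈ B, adjacent c c')

/-!
A row that contains cells both in `B` and outside `B` contains a cell of `∂B` (walk along the row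
from one to the other), and likewise for columns; so there are at most `|∂B|` such mixed rows and
at most `|∂B|` mixed columns. If every row, or every column, is mixed, then `|∂B| ≥ m`. Otherwise
some row and some column are not mixed; they cross, so either both avoid `B` or both lie in `B`.
In the first case every row and every column meeting `B` is mixed, so `|B| ≤ |∂B|²`; in the
second the same argument bounds the complement of `B`.
-/

open Finset

lemma Nat.exists_le_lt_and_not_succ {p : ℕ → Prop} {a b : ℕ} (hab : a ≤ b) (ha : p a)
    (hb : ¬ p b) :
    ∃ t, a ≤ t ∧ t < b ∧ p t ∧ ¬ p (t + 1) := by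
  induction b, hab using Nat.le_induction with
  | base => exact absurd ha hb
  | succ b hab ih =>
    by_cases hpb : p b
    · exact ⟨b, hab, b.lt_succ_self, hpb, hb⟩
    · obtain ⟨t, hat, htb, hpt, hpt'⟩ := ih hpb
      exact ⟨t, hat, htb.trans b.lt_succ_self, hpt, hpt'⟩

lemma adjacent_comm {c c' : ℕ × ℕ} : adjacent c c' ↔ adjacent c' c := by
  unfold adjacent
  grind

lemma mem_gridCells {m : ℕ} {c : ℕ × ℕ} :
    c ∈ gridCells m ↔ (1 ≤ c.1 ∧ c.1 ≤ m) ∧ (1 ≤ c.2 ∧ c.2 ≤ m) := by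
  simp [gridCells, mem_product, mem_Icc]

lemma card_gridCells (m : ℕ) : (gridCells m).card = m ^ 2 := by
  simp [gridCells, sq]

section

variable {m : ℕ} {B : Finset (ℕ × ℕ)}

lemma mem_gridBoundary_of_adjacent {c c' : ℕ × ℕ} (hc : c ∈ gridCells m) (hcB : c ∉ B)
    (hc'B : c' ∈ B) (h : adjacent c c') : c ∈ gridBoundary m B := by
  classical
  exact mem_filter.2 ⟨hc, hcB, c', hc'B, h⟩

lemma exists_mem_gridBoundary_of_path {ℓ : ℕ → ℕ × ℕ} (hℓ : ∀ t, adjacent (ℓ t) (ℓ (t + 1)))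
    {a b : ℕ} (hgrid : ∀ t ∈ Set.uIcc a b, ℓ t ∈ gridCells m) (ha : ℓ a ∈ B) (hb : ℓ b ∉ B) :
    ∃ t, ℓ t ∈ gridBoundary m B := by
  rcases le_total a b with hab | hba
  · obtain ⟨t, hat, htb, hin, hout⟩ := Nat.exists_le_lt_and_not_succ (p := (ℓ · ∈ B)) hab ha hb
    exact ⟨t + 1, mem_gridBoundary_of_adjacent (hgrid _ (Set.mem_uIcc.2 (.inl ⟨by omega, htb⟩)))
      hout hin (adjacent_comm.1 (hℓ t))⟩
  · obtain ⟨t, hbt, hta, hout, hin⟩ :=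
      Nat.exists_le_lt_and_not_succ (p := fun t => ℓ t ∉ B) hba hb (not_not.2 ha)
    exact ⟨t, mem_gridBoundary_of_adjacent (hgrid _ (Set.mem_uIcc.2 (.inr ⟨hbt, hta.le⟩))) hout
      (not_not.1 hin) (hℓ t)⟩

def mixedRows (m : ℕ) (B : Finset (ℕ × ℕ)) : Finset ℕ :=
  B.image Prod.fst ∩ (gridCells m \ B).image Prod.fst

def mixedCols (m : ℕ) (B : Finset (ℕ × ℕ)) : Finset ℕ :=
  B.image Prod.snd ∩ (gridCells m \ B).image Prod.snd

lemma mixedRows_sdiff (hB : B ⊆ gridCells m) : mixedRows m (gridCells m \ B) = mixedRows m B := by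
  rw [mixedRows, mixedRows, Finset.sdiff_sdiff_eq_self hB, inter_comm]

lemma mixedCols_sdiff (hB : B ⊆ gridCells m) : mixedCols m (gridCells m \ B) = mixedCols m B := by
  rw [mixedCols, mixedCols, Finset.sdiff_sdiff_eq_self hB, inter_comm]

lemma card_mixedRows_le (hB : B ⊆ gridCells m) :
    (mixedRows m B).card ≤ (gridBoundary m B).card := by
  refine (card_le_card (t := (gridBoundary m B).image Prod.fst) fun i hi => ?_).trans card_image_le
  obtain ⟨⟨j₁, hin⟩, ⟨j₂, hgrid, hout⟩⟩ := by simpa [mixedRows] using hi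
  have h₁ := mem_gridCells.1 (hB hin)
  have h₂ := mem_gridCells.1 hgrid
  obtain ⟨j, hj⟩ := exists_mem_gridBoundary_of_path (ℓ := (i, ·)) (fun t => .inl ⟨rfl, .inl rfl⟩)
    (fun t ht => mem_gridCells.2 ⟨h₁.1, by simp only [Set.mem_uIcc] at ht; omega⟩) hin hout
  exact mem_image.2 ⟨_, hj, rfl⟩

lemma card_mixedCols_le (hB : B ⊆ gridCells m) :
    (mixedCols m B).card ≤ (gridBoundary m B).card := by
  refine (card_le_card (t := (gridBoundary m B).image Prod.snd) fun j hj => ?_).trans card_image_le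
  obtain ⟨⟨i₁, hin⟩, ⟨i₂, hgrid, hout⟩⟩ := by simpa [mixedCols] using hj
  have h₁ := mem_gridCells.1 (hB hin)
  have h₂ := mem_gridCells.1 hgrid
  obtain ⟨i, hi⟩ := exists_mem_gridBoundary_of_path (ℓ := (·, j)) (fun t => .inr ⟨rfl, .inl rfl⟩)
    (fun t ht => mem_gridCells.2 ⟨by simp only [Set.mem_uIcc] at ht; omega, h₁.2⟩) hin hout
  exact mem_image.2 ⟨_, hi, rfl⟩

lemma card_le_card_mixedRows_mul_card_mixedCols (hB : B ⊆ gridCells m) {i₀ j₀ : ℕ}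
    (hc : (i₀, j₀) ∈ gridCells m \ B) (hi₀ : i₀ ∉ mixedRows m B) (hj₀ : j₀ ∉ mixedCols m B) :
    B.card ≤ (mixedRows m B).card * (mixedCols m B).card := by
  have hrow : ∀ j, (i₀, j) ∉ B := fun j h =>
    hi₀ (mem_inter.2 ⟨mem_image_of_mem Prod.fst h, mem_image_of_mem Prod.fst hc⟩)
  have hcol : ∀ i, (i, j₀) ∉ B := fun i h =>
    hj₀ (mem_inter.2 ⟨mem_image_of_mem Prod.snd h, mem_image_of_mem Prod.snd hc⟩)
  have hc₀ := mem_gridCells.1 (mem_sdiff.1 hc).1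
  rw [← card_product]
  refine card_le_card fun ⟨i, j⟩ hij => ?_
  have hij' := mem_gridCells.1 (hB hij)
  have hi : (i, j₀) ∈ gridCells m \ B := mem_sdiff.2 ⟨mem_gridCells.2 ⟨hij'.1, hc₀.2⟩, hcol i⟩
  have hj : (i₀, j) ∈ gridCells m \ B := mem_sdiff.2 ⟨mem_gridCells.2 ⟨hc₀.1, hij'.2⟩, hrow j⟩
  exact mem_product.2 ⟨mem_inter.2 ⟨mem_image.2 ⟨_, hij, rfl⟩, mem_image.2 ⟨_, hi, rfl⟩⟩,
    mem_inter.2 ⟨mem_image.2 ⟨_, hij, rfl⟩, mem_image.2 ⟨_, hj, rfl⟩⟩⟩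

lemma min_card_le_sq_card_gridBoundary (hB : B ⊆ gridCells m) :
    min B.card (m ^ 2 - B.card) ≤ (gridBoundary m B).card ^ 2 := by
  set k := (gridBoundary m B).card
  have hmixed : (mixedRows m B).card * (mixedCols m B).card ≤ k ^ 2 :=
    (sq k).symm ▸ Nat.mul_le_mul (card_mixedRows_le hB) (card_mixedCols_le hB)
  have hfull : ∀ L : Finset ℕ, Icc 1 m ⊆ L → L.card ≤ k → min B.card (m ^ 2 - B.card) ≤ k ^ 2 :=
    fun L hL hLk => calc
      _ ≤ B.card := min_le_left _ _
      _ ≤ m ^ 2 := card_gridCells m ▸ card_le_card hB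
      _ ≤ k ^ 2 := Nat.pow_le_pow_left (by simpa using (card_le_card hL).trans hLk) 2
  by_cases hrows : Icc 1 m ⊆ mixedRows m B
  · exact hfull _ hrows (card_mixedRows_le hB)
  by_cases hcols : Icc 1 m ⊆ mixedCols m B
  · exact hfull _ hcols (card_mixedCols_le hB)
  obtain ⟨i₀, hi₀, hi₀'⟩ := not_subset.1 hrows
  obtain ⟨j₀, hj₀, hj₀'⟩ := not_subset.1 hcols
  have hc : (i₀, j₀) ∈ gridCells m := mem_product.2 ⟨hi₀, hj₀⟩
  by_cases h : (i₀, j₀) ∈ B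
  · rw [← mixedRows_sdiff hB] at hi₀'
    rw [← mixedCols_sdiff hB] at hj₀'
    rw [← mixedRows_sdiff hB, ← mixedCols_sdiff hB] at hmixed
    have hc' : (i₀, j₀) ∈ gridCells m \ (gridCells m \ B) := by
      rwa [Finset.sdiff_sdiff_eq_self hB]
    calc _ ≤ m ^ 2 - B.card := min_le_right _ _
      _ = (gridCells m \ B).card := by rw [card_sdiff_of_subset hB, card_gridCells]
      _ ≤ _ := card_le_card_mixedRows_mul_card_mixedCols sdiff_subset hc' hi₀' hj₀'
      _ ≤ k ^ 2 := hmixed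
  · calc _ ≤ B.card := min_le_left _ _
      _ ≤ _ := card_le_card_mixedRows_mul_card_mixedCols hB (mem_sdiff.2 ⟨hc, h⟩) hi₀' hj₀'
      _ ≤ k ^ 2 := hmixed

end

theorem boundary_card_ge_sqrt_min_general (m : ℕ)
    (B : Finset (ℕ × ℕ)) (hB : B ⊆ gridCells m) :
    ((gridBoundary m B).card : ℝ) ≥
      Real.sqrt (min (B.card : ℝ) ((m : ℝ) ^ 2 - (B.card : ℝ))) := by
  have hBm : B.card ≤ m ^ 2 := card_gridCells m ▸ card_le_card hB
  have key : ((min B.card (m ^ 2 - B.card) : ℕ) : ℝ) ≤ ((gridBoundary m B).card : ℝ) ^ 2 := by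
    exact_mod_cast min_card_le_sq_card_gridBoundary hB
  rw [Nat.cast_min, Nat.cast_sub hBm, Nat.cast_pow] at key
  exact (Real.sqrt_le_left (Nat.cast_nonneg _)).2 key

theorem boundary_card_ge_sqrt_min (m : ℕ) (hm : 1 ≤ m)
    (B : Finset (ℕ × ℕ)) (hB : B ⊆ gridCells m) :
    ((gridBoundary m B).card : ℝ) ≥
      Real.sqrt (min (B.card : ℝ) ((m : ℝ) ^ 2 - (B.card : ℝ))) :=
  boundary_card_ge_sqrt_min_general m B hB
end

section
/- Let K ≥ 1 be an integer and let (q_t)_{t∈ℕ} be a sequence of integers such that q_0 ≥ 1 and, for every t ≥ 0, q_t ≤ K and q_{t+1} ≥ q_t + √(min{q_t, K − q_t}). Then for every natural number t with t ≥ 5·√K it holds that q_t = K. -/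
/-!
The potential `√q - √(K - q)` increases by at least `2/5` at every step before `q` reaches `K`:
if `q ≤ K - q`, the step `√q` makes `√q` grow by `2/5`, otherwise the step `√(K - q)` makes
`√(K - q)` drop by `1/2`, and in both cases the other square root moves the right way too.
While `1 ≤ q ≤ K - 1` the potential stays in `[1 - √K, √K - 1]`, so fewer than `5√K` steps
can be taken before `q = K`.
-/

open Real

namespace Real

lemma sqrt_add_two_fifths_le_sqrt {a b : ℝ} (ha : 1 ≤ a) (hb : a + √a ≤ b) :
    √a + 2 / 5 ≤ √b := by
  have h1 : 1 ≤ √a := one_le_sqrt.mpr ha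
  have hsq : √a ^ 2 = a := sq_sqrt (by linarith)
  exact (le_sqrt (by positivity) (by linarith)).mpr (by nlinarith)

lemma sqrt_le_sqrt_sub_half {c d : ℝ} (hc : 1 ≤ c) (hd : d ≤ c - √c) :
    √d ≤ √c - 1 / 2 := by
  have h1 : 1 ≤ √c := one_le_sqrt.mpr hc
  have hsq : √c ^ 2 = c := sq_sqrt (by linarith)
  exact (sqrt_le_left (by linarith)).mpr (by nlinarith)

end Real

noncomputable def sqrtGap (K a : ℝ) : ℝ := √a - √(K - a)

lemma sqrtGap_add_two_fifths_le {K a b : ℝ} (ha : 1 ≤ a) (hKa : 1 ≤ K - a)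
    (hb : a + √(min a (K - a)) ≤ b) : sqrtGap K a + 2 / 5 ≤ sqrtGap K b := by
  have hab : a ≤ b := le_trans (le_add_of_nonneg_right (sqrt_nonneg _)) hb
  have hup : √a ≤ √b := sqrt_le_sqrt hab
  have hdown : √(K - b) ≤ √(K - a) := sqrt_le_sqrt (by linarith)
  unfold sqrtGap
  rcases le_total a (K - a) with hmin | hmin
  · rw [min_eq_left hmin] at hb
    linarith [sqrt_add_two_fifths_le_sqrt ha hb]
  · rw [min_eq_right hmin] at hb
    linarith [sqrt_le_sqrt_sub_half hKa (show K - b ≤ (K - a) - √(K - a) by linarith)]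

lemma abs_sqrtGap_le {K a : ℝ} (ha : 1 ≤ a) (hKa : 1 ≤ K - a) :
    |sqrtGap K a| ≤ √K - 1 := by
  have h1 : 1 ≤ √a := one_le_sqrt.mpr ha
  have h2 : 1 ≤ √(K - a) := one_le_sqrt.mpr hKa
  have h3 : √a ≤ √K := sqrt_le_sqrt (by linarith)
  have h4 : √(K - a) ≤ √K := sqrt_le_sqrt (by linarith)
  rw [sqrtGap, abs_sub_le_iff]
  constructor <;> linarith

lemma sqrtGap_add_le_of_forall_lt {K : ℝ} {q : ℕ → ℝ} {t : ℕ}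
    (hq : ∀ s < t, 1 ≤ q s ∧ 1 ≤ K - q s)
    (hstep : ∀ s, q s + √(min (q s) (K - q s)) ≤ q (s + 1)) :
    sqrtGap K (q 0) + 2 / 5 * t ≤ sqrtGap K (q t) := by
  induction t with
  | zero => simp
  | succ n ih =>
    have hn := hq n (Nat.lt_succ_self n)
    have hprev := ih fun s hs => hq s (hs.trans (Nat.lt_succ_self n))
    have hgain := sqrtGap_add_two_fifths_le hn.1 hn.2 (hstep n)
    push_cast
    linarith

theorem spreading_time_general (K : ℤ) (q : ℕ → ℤ) (hq0 : 1 ≤ q 0)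
    (hqK : ∀ t : ℕ, q t ≤ K)
    (hstep : ∀ t : ℕ,
      (q (t + 1) : ℝ) ≥ (q t : ℝ) + Real.sqrt (min ((q t : ℝ)) ((K : ℝ) - (q t : ℝ))))
    (t : ℕ) (ht : (t : ℝ) ≥ 5 * Real.sqrt (K : ℝ)) :
    q t = K := by
  by_contra hne
  have hqt : (q t : ℝ) ≤ K - 1 := by exact_mod_cast Int.le_sub_one_of_lt ((hqK t).lt_of_ne hne)
  have hmono : Monotone fun s => (q s : ℝ) :=
    monotone_nat_of_le_succ fun s => by linarith [hstep s, sqrt_nonneg (min (q s : ℝ) (K - q s))]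
  have hq0' : (1 : ℝ) ≤ q 0 := by exact_mod_cast hq0
  have hbounds : ∀ s ≤ t, 1 ≤ (q s : ℝ) ∧ 1 ≤ (K : ℝ) - q s := fun s hs =>
    ⟨by linarith [hmono (Nat.zero_le s)], by linarith [hmono hs]⟩
  have hgrowth := sqrtGap_add_le_of_forall_lt (fun s hs => hbounds s hs.le) fun s => (hstep s).le
  have h0 := abs_le.mp (abs_sqrtGap_le (hbounds 0 (Nat.zero_le t)).1 (hbounds 0 (Nat.zero_le t)).2)
  have ht' := abs_le.mp (abs_sqrtGap_le (hbounds t le_rfl).1 (hbounds t le_rfl).2)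
  linarith

theorem spreading_time (K : ℤ) (hK : 1 ≤ K) (q : ℕ → ℤ) (hq0 : 1 ≤ q 0)
    (hqK : ∀ t : ℕ, q t ≤ K)
    (hstep : ∀ t : ℕ,
      (q (t + 1) : ℝ) ≥ (q t : ℝ) + Real.sqrt (min ((q t : ℝ)) ((K : ℝ) - (q t : ℝ))))
    (t : ℕ) (ht : (t : ℝ) ≥ 5 * Real.sqrt (K : ℝ)) :
    q t = K :=
  spreading_time_general K q hq0 hqK hstep t ht
end

section
/- Let K ≥ 1 be an integer and let (q_t)_{t∈ℕ} be a sequence of integers such that q_0 ≥ 1 and, for every t ≥ 0, q_t ≤ K and q_{t+1} ≥ q_t + √(min{q_t, K − q_t}). Then for every natural number t such that q_i < K/2 for all i < t, it holds that q_t ≥ t²/8. -/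
/-! The sequence is bounded away from `K / 2` before time `t`, so there `min (q i) (K - q i) = q i`
and the recursion reads `q (i + 1) ≥ q i + √(q i)`. Such a sequence grows like a square:
the invariant `q i ≥ (i + 2)² / 8` is preserved, because `√((i + 2)² / 8) ≥ (2i + 5) / 8`. -/

lemma sq_div_eight_le_add_sqrt {m x : ℝ} (hm : 0 ≤ m) (hx : (m + 2) ^ 2 / 8 ≤ x) :
    (m + 3) ^ 2 / 8 ≤ x + √x := by
  have hsqrt : (2 * m + 5) / 8 ≤ √x :=
    Real.le_sqrt_of_sq_le (by nlinarith)
  linarith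

lemma sq_div_eight_le_of_add_sqrt_le {x : ℕ → ℝ} (h0 : 1 ≤ x 0) :
    ∀ t : ℕ, (∀ n < t, x n + √(x n) ≤ x (n + 1)) → ((t : ℝ) + 2) ^ 2 / 8 ≤ x t
  | 0, _ => by norm_num; linarith
  | t + 1, hstep => by
    have ih := sq_div_eight_le_of_add_sqrt_le h0 t fun n hn => hstep n (by omega)
    calc ((↑(t + 1) : ℝ) + 2) ^ 2 / 8 = ((t : ℝ) + 3) ^ 2 / 8 := by push_cast; ring
      _ ≤ x t + √(x t) := sq_div_eight_le_add_sqrt t.cast_nonneg ih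
      _ ≤ x (t + 1) := hstep t t.lt_succ_self

theorem q_ge_sq_div_eight_general (K : ℤ) (q : ℕ → ℤ) (hq0 : 1 ≤ q 0)
    (hstep : ∀ t : ℕ,
      (q (t + 1) : ℝ) ≥ (q t : ℝ) + Real.sqrt (min ((q t : ℝ)) ((K : ℝ) - (q t : ℝ))))
    (t : ℕ) (hlt : ∀ i : ℕ, i < t → (q i : ℝ) < (K : ℝ) / 2) :
    (q t : ℝ) ≥ (t : ℝ) ^ 2 / 8 := by
  have hgrowth : ∀ n < t, (q n : ℝ) + √(q n : ℝ) ≤ q (n + 1) := by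
    intro n hn
    have hmin : min (q n : ℝ) (K - q n) = q n := min_eq_left (by linarith [hlt n hn])
    simpa only [hmin] using hstep n
  have hsq := sq_div_eight_le_of_add_sqrt_le (x := fun n => (q n : ℝ))
    (by exact_mod_cast hq0) t hgrowth
  have ht : (0 : ℝ) ≤ t := t.cast_nonneg
  nlinarith

theorem q_ge_sq_div_eight (K : ℤ) (hK : 1 ≤ K) (q : ℕ → ℤ) (hq0 : 1 ≤ q 0)
    (hqK : ∀ t : ℕ, q t ≤ K)
    (hstep : ∀ t : ℕ,
      (q (t + 1) : ℝ) ≥ (q t : ℝ) + Real.sqrt (min ((q t : ℝ)) ((K : ℝ) - (q t : ℝ))))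
    (t : ℕ) (hlt : ∀ i : ℕ, i < t → (q i : ℝ) < (K : ℝ) / 2) :
    (q t : ℝ) ≥ (t : ℝ) ^ 2 / 8 :=
  q_ge_sq_div_eight_general K q hq0 hstep t hlt
end

section
/- Let K ≥ 1 be an integer and let (q_t)_{t∈ℕ} be a sequence of integers such that q_0 ≥ 1 and, for every t ≥ 0, q_t ≤ K and q_{t+1} ≥ q_t + √(min{q_t, K − q_t}). Then there exists a natural number τ with τ ≤ 2·√K + 1 such that q_τ ≥ K/2. -/
/-!
While `q t < K / 2` the minimum in the step condition is `q t`, so `q (t + 1) ≥ q t + √(q t)`,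
and since `q t ≥ 1` this makes `√(q t)` grow by at least `2 / 5` per step. After
`T = ⌈2√K⌉₊ ≤ 2√K + 1` such steps `√(q T) ≥ 1 + 4√K / 5 > √(K / 2)`, so `q` must have
reached `K / 2` by time `T`.
-/

open Real

/-- The constant `2 / 5` works because `(√x + c) ^ 2 ≤ x + √x` once `c ^ 2 ≤ (1 - 2c) √x`,
and `√x ≥ 1`. -/
lemma Real.sqrt_add_two_fifths_le_sqrt_add_sqrt {x : ℝ} (hx : 1 ≤ x) :
    √x + 2 / 5 ≤ √(x + √x) := by
  have h_one : 1 ≤ √x := Real.one_le_sqrt.mpr hx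
  have h_sq : √x ^ 2 = x := Real.sq_sqrt (by linarith)
  apply Real.le_sqrt_of_sq_le
  nlinarith

lemma one_add_two_fifths_mul_le_sqrt_of_add_sqrt_le {u : ℕ → ℝ} {n : ℕ} (h₀ : 1 ≤ u 0)
    (hstep : ∀ t < n, u t + √(u t) ≤ u (t + 1)) :
    1 + 2 / 5 * n ≤ √(u n) := by
  induction n with
  | zero => simpa using Real.one_le_sqrt.mpr h₀
  | succ n ih =>
    have ih := ih fun t ht => hstep t (Nat.lt_succ_of_lt ht)
    have hu : 1 ≤ u n := Real.one_le_sqrt.mp (by linarith [ih])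
    calc 1 + 2 / 5 * ((n + 1 : ℕ) : ℝ) ≤ √(u n) + 2 / 5 := by push_cast; linarith
      _ ≤ √(u n + √(u n)) := Real.sqrt_add_two_fifths_le_sqrt_add_sqrt hu
      _ ≤ √(u (n + 1)) := Real.sqrt_le_sqrt (hstep n n.lt_succ_self)

theorem exists_half_time_general (K : ℤ) (q : ℕ → ℤ) (hq0 : 1 ≤ q 0)
    (hstep : ∀ t : ℕ,
      (q (t + 1) : ℝ) ≥ (q t : ℝ) + Real.sqrt (min ((q t : ℝ)) ((K : ℝ) - (q t : ℝ)))) :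
    ∃ τ : ℕ, (τ : ℝ) ≤ 2 * Real.sqrt (K : ℝ) + 1 ∧ (q τ : ℝ) ≥ (K : ℝ) / 2 := by
  by_contra! h_small
  set T := ⌈2 * √(K : ℝ)⌉₊
  have h_before : ∀ t ≤ T, (q t : ℝ) < K / 2 := fun t ht =>
    h_small t (by linarith [Nat.ceil_lt_add_one (by positivity : 0 ≤ 2 * √(K : ℝ)),
      (Nat.cast_le (α := ℝ)).mpr ht])
  have h_growth : 1 + 2 / 5 * (T : ℝ) ≤ √(q T : ℝ) :=
    one_add_two_fifths_mul_le_sqrt_of_add_sqrt_le (u := fun t => (q t : ℝ))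
      (by exact_mod_cast hq0) fun t ht => by
        have h_min : min (q t : ℝ) (K - q t) = q t := min_eq_left (by linarith [h_before t ht.le])
        simpa [h_min] using hstep t
  have hK_nonneg : (0 : ℝ) ≤ K := by
    linarith [h_before 0 (Nat.zero_le _), (show (1 : ℝ) ≤ q 0 by exact_mod_cast hq0)]
  have h_sqrt_half : √(q T : ℝ) ≤ √((K : ℝ) / 2) := Real.sqrt_le_sqrt (h_before T le_rfl).le
  have hT : 2 * √(K : ℝ) ≤ T := Nat.le_ceil _
  have h_sqK : √((K : ℝ) / 2) ^ 2 = √(K : ℝ) ^ 2 / 2 := by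
    rw [Real.sq_sqrt (by positivity), Real.sq_sqrt hK_nonneg]
  nlinarith [Real.sqrt_nonneg ((K : ℝ) / 2), Real.sqrt_nonneg (K : ℝ)]

theorem exists_half_time (K : ℤ) (hK : 1 ≤ K) (q : ℕ → ℤ) (hq0 : 1 ≤ q 0)
    (hqK : ∀ t : ℕ, q t ≤ K)
    (hstep : ∀ t : ℕ,
      (q (t + 1) : ℝ) ≥ (q t : ℝ) + Real.sqrt (min ((q t : ℝ)) ((K : ℝ) - (q t : ℝ)))) :
    ∃ τ : ℕ, (τ : ℝ) ≤ 2 * Real.sqrt (K : ℝ) + 1 ∧ (q τ : ℝ) ≥ (K : ℝ) / 2 :=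
  exists_half_time_general K q hq0 hstep
end

section
/- Let K ≥ 3 be an integer and let (q_t)_{t∈ℕ} be a sequence of integers such that q_0 ≥ 1 and, for every t ≥ 0, q_t ≤ K and q_{t+1} ≥ q_t + √(min{q_t, K − q_t}). Let τ be a natural number with τ ≤ 2·√K + 1 and q_τ ≥ K/2. Then for every natural number t with τ ≤ t ≤ ⌈5·√K⌉ it holds that q_t ≥ K − ⌈(⌈5·√K⌉ − t)²/9⌉. -/
/-!
Put `T = ⌈5√K⌉`. Once `q` has reached `K/2` the minimum in the recursion is the gap
`d = K - q`, so `d_{t+1} ≤ d_t - √d_t`. For an integer `d ≤ (a/3)²` one has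
`d - √d ≤ ((a-1)/3)²` (trivially if `d ≤ 0`, and because `y ↦ y² - y` is increasing for
`y = √d ≥ 1`), so the bound `d_t ≤ (T - t)²/9` propagates from `t = τ`, where it holds since
`T - τ ≥ 3√K - 1` and `(3√K - 1)² ≥ 9K/2` for `K ≥ 3`.
-/

open Real

lemma sub_sqrt_le_sub_one_sq_div_nine {d : ℤ} {a : ℝ} (ha : 0 ≤ a) (hd : (d : ℝ) ≤ a ^ 2 / 9) :
    (d : ℝ) - √d ≤ (a - 1) ^ 2 / 9 := by
  rcases le_or_gt d 0 with hd_nonpos | hd_pos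
  · have : (d : ℝ) ≤ 0 := by exact_mod_cast hd_nonpos
    nlinarith [sqrt_nonneg (d : ℝ)]
  · have hd_one : (1 : ℝ) ≤ d := by exact_mod_cast hd_pos
    have hy_one : 1 ≤ √(d : ℝ) := one_le_sqrt.mpr hd_one
    have hy_le : √(d : ℝ) ≤ a / 3 := (sqrt_le_left (by positivity)).mpr (by linarith)
    have hy_sq : √(d : ℝ) ^ 2 = d := sq_sqrt (by linarith)
    nlinarith [mul_nonneg (sub_nonneg.mpr hy_le) (by linarith : (0 : ℝ) ≤ a / 3 + √d - 1)]

lemma half_le_sq_div_nine {K τ T : ℝ} (hK : 3 ≤ K) (hτ : τ ≤ 2 * √K + 1) (hT : 5 * √K ≤ T) :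
    K / 2 ≤ (T - τ) ^ 2 / 9 := by
  have hx_sq : √K ^ 2 = K := sq_sqrt (by linarith)
  have hx_one : 1 ≤ √K := one_le_sqrt.mpr (by linarith)
  have hgap : 3 * √K - 1 ≤ T - τ := by linarith
  have : (3 * √K - 1) ^ 2 ≤ (T - τ) ^ 2 := pow_le_pow_left₀ (by linarith) hgap 2
  nlinarith

theorem sub_le_sq_div_nine_of_sqrt_step {K T : ℤ} {q : ℕ → ℤ} {τ : ℕ}
    (hstep : ∀ t : ℕ, (q (t + 1) : ℝ) ≥ q t + √(min (q t : ℝ) (K - q t)))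
    (hqτ : (K : ℝ) / 2 ≤ q τ) (hbase : (K : ℝ) - q τ ≤ ((T - τ : ℤ) : ℝ) ^ 2 / 9)
    (s : ℕ) (hτs : τ ≤ s) (hsT : (s : ℤ) ≤ T) :
    (K : ℝ) - q s ≤ ((T - s : ℤ) : ℝ) ^ 2 / 9 := by
  have hmono : Monotone fun n => (q n : ℝ) :=
    monotone_nat_of_le_succ fun n => by linarith [hstep n, sqrt_nonneg (min (q n : ℝ) (K - q n))]
  induction s, hτs using Nat.le_induction with
  | base => exact hbase
  | succ n hτn ih =>
    have hhalf : (K : ℝ) / 2 ≤ q n := hqτ.trans (hmono hτn)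
    have hgap_step : (K : ℝ) - q (n + 1) ≤ ((K - q n : ℤ) : ℝ) - √((K - q n : ℤ) : ℝ) := by
      have := hstep n
      rw [min_eq_right (by linarith)] at this
      push_cast
      linarith
    have ha : (0 : ℝ) ≤ ((T - n : ℤ) : ℝ) := by exact_mod_cast (by omega : (0 : ℤ) ≤ T - n)
    have hd : ((K - q n : ℤ) : ℝ) ≤ ((T - n : ℤ) : ℝ) ^ 2 / 9 := by
      push_cast at ih ⊢
      exact ih (by omega)
    have key := sub_sqrt_le_sub_one_sq_div_nine ha hd
    push_cast at hgap_step key ⊢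
    linarith

theorem q_ge_K_sub_ceil_general (K : ℤ) (hK : 3 ≤ K) (q : ℕ → ℤ)
    (hstep : ∀ t : ℕ,
      (q (t + 1) : ℝ) ≥ (q t : ℝ) + Real.sqrt (min ((q t : ℝ)) ((K : ℝ) - (q t : ℝ))))
    (τ : ℕ) (hτ : (τ : ℝ) ≤ 2 * Real.sqrt (K : ℝ) + 1) (hqτ : (q τ : ℝ) ≥ (K : ℝ) / 2)
    (t : ℕ) (ht1 : τ ≤ t) (ht2 : (t : ℤ) ≤ ⌈5 * Real.sqrt (K : ℝ)⌉) :
    (q t : ℝ) ≥ (K : ℝ) -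
      (⌈((((⌈5 * Real.sqrt (K : ℝ)⌉ : ℤ) - (t : ℤ) : ℤ) : ℝ) ^ 2 / 9)⌉ : ℝ) := by
  set T : ℤ := ⌈5 * √(K : ℝ)⌉
  have hbase : (K : ℝ) - q τ ≤ ((T - τ : ℤ) : ℝ) ^ 2 / 9 := by
    have := half_le_sq_div_nine (by exact_mod_cast hK) hτ (Int.le_ceil (5 * √(K : ℝ)))
    push_cast
    linarith
  have hgap := sub_le_sq_div_nine_of_sqrt_step hstep hqτ hbase t ht1 ht2
  linarith [Int.le_ceil ((((T - t : ℤ)) : ℝ) ^ 2 / 9)]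

theorem q_ge_K_sub_ceil (K : ℤ) (hK : 3 ≤ K) (q : ℕ → ℤ) (hq0 : 1 ≤ q 0)
    (hqK : ∀ t : ℕ, q t ≤ K)
    (hstep : ∀ t : ℕ,
      (q (t + 1) : ℝ) ≥ (q t : ℝ) + Real.sqrt (min ((q t : ℝ)) ((K : ℝ) - (q t : ℝ))))
    (τ : ℕ) (hτ : (τ : ℝ) ≤ 2 * Real.sqrt (K : ℝ) + 1) (hqτ : (q τ : ℝ) ≥ (K : ℝ) / 2)
    (t : ℕ) (ht1 : τ ≤ t) (ht2 : (t : ℤ) ≤ ⌈5 * Real.sqrt (K : ℝ)⌉) :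
    (q t : ℝ) ≥ (K : ℝ) -
      (⌈((((⌈5 * Real.sqrt (K : ℝ)⌉ : ℤ) - (t : ℤ) : ℤ) : ℝ) ^ 2 / 9)⌉ : ℝ) :=
  q_ge_K_sub_ceil_general K hK q hstep τ hτ hqτ t ht1 ht2
end
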